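/- Let L ≥ 1 be an integer, r > 1 a real number, and ε : {1,…,L+1} → {0,1} any map. Let A(0) be the L×L real symmetric tridiagonal matrix with diagonal entries A_{j,j}(0) = 1 if ε_j ≠ ε_{j+1}, A_{j,j}(0) = 2/r if ε_j = ε_{j+1} = 1, A_{j,j}(0) = 2(r−1)/r if ε_j = ε_{j+1} = 0 (1 ≤ j ≤ L), off-diagonal entries A_{j,j+1}(0) = A_{j+1,j}(0) = −1/r if ε_{j+1} = 1 and = (1−r)/r if ε_{j+1} = 0 (1 ≤ j ≤ L−1), and all other entries 0. Set n₊ = #{1 ≤ j ≤ L+1 : ε_j = 1} and n₋ = #{1 ≤ j ≤ L+1 : ε_j = 0}. Then det A(0) = r^{−L} (r−1)^{n₋−1} ((r−1)n₊ + n₋); in particular det A(0) ≠ 0. (This is the m = 0 case of Lemma 3.12 for the Gram matrix (A_{i,j}(0))_{i,j=1}^L of the free field construction of W_{q,t}(A(M,N)); here (r−1)n₊ + n₋ = D(0,L;Φ).) -/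

import Mathlib

/-- The entry `A_{k,l}(0)` (1-based indices) of the Gram matrix of the free field
construction of `W_{q,t}(A(M,N))`: a symmetric tridiagonal matrix determined by the
Dynkin-diagram data `ε` (with `ε j = true` standing for `ε_j = 1`). -/
noncomputable def A0ent (r : ℝ) (ε : ℕ → Bool) (k l : ℕ) : ℝ :=
  if k = l then
    (if ε k ≠ ε (k + 1) then 1 else if ε (k + 1) then 2 / r else 2 * (r - 1) / r)
  else if l = k + 1 then (if ε l then -1 / r else (1 - r) / r)
  else if k = l + 1 then (if ε k then -1 / r else (1 - r) / r)
  else 0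

/-- The `L × L` matrix `(A_{i,j}(0))_{i,j=1}^L`. -/
noncomputable def matA0 (L : ℕ) (r : ℝ) (ε : ℕ → Bool) : Matrix (Fin L) (Fin L) ℝ :=
  Matrix.of fun k l => A0ent r ε ((k : ℕ) + 1) ((l : ℕ) + 1)

/-- The number `n₊ = #{1 ≤ j ≤ L+1 : ε_j = 1}`. -/
def nPlus (L : ℕ) (ε : ℕ → Bool) : ℕ :=
  ((Finset.Icc 1 (L + 1)).filter fun j => ε j = true).card

/-- The number `n₋ = #{1 ≤ j ≤ L+1 : ε_j = 0}`. -/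
def nMinus (L : ℕ) (ε : ℕ → Bool) : ℕ :=
  ((Finset.Icc 1 (L + 1)).filter fun j => ε j = false).card

/-!
Up to the factor `r⁻¹`, `A(0)` is the Dirichlet Laplacian of a path whose `L + 1` edges carry the
weights `u_j = 1` if `ε_j = 1` and `u_j = r - 1` if `ε_j = 0`: it is tridiagonal with diagonal
`u_j + u_{j+1}` and off-diagonal `-u_{j+1}`. Expanding along the last row, the determinant of a
tridiagonal matrix obeys the three-term continuant recurrence, and for this Laplacian the recurrence
is solved by `(∏ u_j) (∑ u_j⁻¹)`, the weighted count of spanning trees. Finally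
`∏ u_j = (r - 1)^{n₋}` and `∑ u_j⁻¹ = n₊ + n₋ / (r - 1)`, both positive.
-/

open Finset

namespace Matrix

variable {R : Type*} [CommRing R]

def tridiagonal (n : ℕ) (a b c : ℕ → R) : Matrix (Fin n) (Fin n) R :=
  of fun i j =>
    if (i : ℕ) = j then a i
    else if (j : ℕ) = i + 1 then b i
    else if (i : ℕ) = j + 1 then c j
    else 0

def continuant (a b c : ℕ → R) : ℕ → R
  | 0 => 1
  | 1 => a 0
  | n + 2 => a (n + 1) * continuant a b c (n + 1) - b n * c n * continuant a b c n

lemma tridiagonal_submatrix_castSucc (n : ℕ) (a b c : ℕ → R) :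
    (tridiagonal (n + 1) a b c).submatrix Fin.castSucc Fin.castSucc = tridiagonal n a b c := by
  ext i j
  simp [tridiagonal]

lemma det_tridiagonal_submatrix_castSucc_succAbove (n : ℕ) (a b c : ℕ → R) :
    ((tridiagonal (n + 2) a b c).submatrix Fin.castSucc (Fin.last n).castSucc.succAbove).det =
      b n * (tridiagonal n a b c).det := by
  have hminor : ((tridiagonal (n + 2) a b c).submatrix Fin.castSucc
      (Fin.last n).castSucc.succAbove).submatrix Fin.castSucc Fin.castSucc =
        tridiagonal n a b c := by
    ext i j
    simp [tridiagonal,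
      Fin.succAbove_of_castSucc_lt _ _ (Fin.castSucc_lt_castSucc_iff.2 j.castSucc_lt_last)]
  rw [det_succ_column _ (Fin.last n), Fin.sum_univ_castSucc]
  have hfar : ∀ i : Fin n, (tridiagonal (n + 2) a b c).submatrix Fin.castSucc
      (Fin.last n).castSucc.succAbove i.castSucc (Fin.last n) = 0 := by
    intro i
    simp only [submatrix_apply, Fin.succAbove_castSucc_self, tridiagonal, of_apply]
    split_ifs <;> simp_all <;> omega
  simp only [hfar, mul_zero, zero_mul, sum_const_zero, zero_add, Fin.succAbove_last, hminor]
  simp [tridiagonal, ← two_mul, pow_mul]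

lemma det_tridiagonal (a b c : ℕ → R) : ∀ n, (tridiagonal n a b c).det = continuant a b c n
  | 0 => by simp [continuant]
  | 1 => by simp [continuant, tridiagonal, det_unique]
  | n + 2 => by
    have hfar : ∀ j : Fin n, tridiagonal (n + 2) a b c (Fin.last _) j.castSucc.castSucc = 0 := by
      intro j
      simp only [tridiagonal, of_apply]
      split_ifs <;> simp_all <;> omega
    rw [det_succ_row _ (Fin.last (n + 1)), Fin.sum_univ_castSucc, Fin.sum_univ_castSucc]
    simp only [hfar, mul_zero, zero_mul, sum_const_zero, zero_add, Fin.succAbove_last,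
      tridiagonal_submatrix_castSucc, det_tridiagonal_submatrix_castSucc_succAbove,
      det_tridiagonal a b c n, det_tridiagonal a b c (n + 1)]
    have hdiag : tridiagonal (n + 2) a b c (Fin.last _) (Fin.last _) = a (n + 1) := by
      simp [tridiagonal]
    have hsub : tridiagonal (n + 2) a b c (Fin.last _) (Fin.last n).castSucc = c n := by
      simp [tridiagonal]
      omega
    have heven : (-1 : R) ^ (n + 1 + (n + 1)) = 1 := Even.neg_one_pow ⟨n + 1, rfl⟩
    have hodd : (-1 : R) ^ (n + 1 + n) = -1 := Odd.neg_one_pow ⟨n, by ring⟩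
    simp only [hdiag, hsub, Fin.val_last, Fin.val_castSucc, heven, hodd, continuant]
    ring

lemma continuant_pathLaplacian {K : Type*} [Field K] (w : ℕ → K) (hw : ∀ i, w i ≠ 0) :
    ∀ n, continuant (fun k => w (k + 1) + w (k + 2)) (fun k => -w (k + 2)) (fun k => -w (k + 2)) n =
      (∏ i ∈ Icc 1 (n + 1), w i) * ∑ i ∈ Icc 1 (n + 1), (w i)⁻¹
  | 0 => by simp [continuant, hw]
  | 1 => by
    simp only [continuant, prod_Icc_succ_top (by omega : 1 ≤ 1 + 1),
      sum_Icc_succ_top (by omega : 1 ≤ 1 + 1), Icc_self, prod_singleton, sum_singleton]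
    field_simp [hw]
    ring
  | n + 2 => by
    simp only [continuant, continuant_pathLaplacian w hw n, continuant_pathLaplacian w hw (n + 1),
      prod_Icc_succ_top (by omega : 1 ≤ n + 2 + 1), sum_Icc_succ_top (by omega : 1 ≤ n + 2 + 1),
      prod_Icc_succ_top (by omega : 1 ≤ n + 1 + 1), sum_Icc_succ_top (by omega : 1 ≤ n + 1 + 1)]
    field_simp [hw]
    ring

end Matrix

open Matrix

noncomputable def pathWeight (r : ℝ) (ε : ℕ → Bool) (j : ℕ) : ℝ := if ε j then 1 else r - 1

section

variable {r : ℝ} {ε : ℕ → Bool}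

lemma pathWeight_pos (hr : 1 < r) (j : ℕ) : 0 < pathWeight r ε j := by
  unfold pathWeight
  split <;> linarith

lemma mul_A0ent_succ (hr : r ≠ 0) (k l : ℕ) :
    r * A0ent r ε (k + 1) (l + 1) =
      if k = l then pathWeight r ε (k + 1) + pathWeight r ε (k + 2)
      else if l = k + 1 then -pathWeight r ε (k + 2)
      else if k = l + 1 then -pathWeight r ε (l + 2)
      else 0 := by
  unfold A0ent pathWeight
  by_cases hd : k = l
  · subst hd
    cases ε (k + 1) <;> cases ε (k + 2) <;> simp <;> field_simp <;> ring
  by_cases hs : l = k + 1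
  · subst hs
    cases ε (k + 2) <;> simp <;> field_simp
  by_cases hb : k = l + 1
  · subst hb
    cases ε (l + 2) <;> simp [hs] <;> field_simp
  simp [hd, hs, hb]

lemma smul_matA0 (L : ℕ) (hr : r ≠ 0) :
    r • matA0 L r ε = tridiagonal L (fun k => pathWeight r ε (k + 1) + pathWeight r ε (k + 2))
      (fun k => -pathWeight r ε (k + 2)) (fun k => -pathWeight r ε (k + 2)) := by
  ext i j
  simp only [Matrix.smul_apply, matA0, of_apply, smul_eq_mul, mul_A0ent_succ hr, tridiagonal,
    Fin.val_inj]

lemma det_matA0 (L : ℕ) (hr : 1 < r) :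
    (matA0 L r ε).det =
      (∏ j ∈ Icc 1 (L + 1), pathWeight r ε j) * (∑ j ∈ Icc 1 (L + 1), (pathWeight r ε j)⁻¹) /
        r ^ L := by
  have hr0 : r ≠ 0 := by positivity
  have hsmul := congrArg det (smul_matA0 (ε := ε) L hr0)
  rw [det_smul, Fintype.card_fin, det_tridiagonal,
    continuant_pathLaplacian _ fun j => (pathWeight_pos hr j).ne'] at hsmul
  rw [← hsmul]
  field_simp

lemma prod_pathWeight (L : ℕ) : ∏ j ∈ Icc 1 (L + 1), pathWeight r ε j = (r - 1) ^ nMinus L ε := by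
  simp [pathWeight, prod_ite, nMinus]

lemma sum_inv_pathWeight (L : ℕ) :
    ∑ j ∈ Icc 1 (L + 1), (pathWeight r ε j)⁻¹ = nPlus L ε + nMinus L ε * (r - 1)⁻¹ := by
  simp [pathWeight, apply_ite, sum_ite, nPlus, nMinus]

end

theorem statement8_general (L : ℕ) (r : ℝ) (hr : 1 < r) (ε : ℕ → Bool) :
    (matA0 L r ε).det =
        r ^ (-(L : ℝ)) * (r - 1) ^ ((nMinus L ε : ℝ) - 1) *
          ((r - 1) * (nPlus L ε : ℝ) + (nMinus L ε : ℝ)) ∧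
      (matA0 L r ε).det ≠ 0 := by
  have hr1 : 0 < r - 1 := by linarith
  constructor
  · rw [det_matA0 L hr, prod_pathWeight, sum_inv_pathWeight, Real.rpow_neg (by positivity),
      Real.rpow_sub_one hr1.ne', Real.rpow_natCast, Real.rpow_natCast]
    field_simp
  · rw [det_matA0 L hr]
    have hprod := prod_pos fun j (_ : j ∈ Icc 1 (L + 1)) => pathWeight_pos (ε := ε) hr j
    have hsum := sum_pos (fun j (_ : j ∈ Icc 1 (L + 1)) => inv_pos.2 (pathWeight_pos (ε := ε) hr j))
      (nonempty_Icc.2 (by omega))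
    positivity

/-- The `m = 0` case of Lemma 3.12:
`det A(0) = r^{-L} (r-1)^{n₋-1} ((r-1)n₊ + n₋)`, and in particular `det A(0) ≠ 0`. -/
theorem statement8 (L : ℕ) (hL : 1 ≤ L) (r : ℝ) (hr : 1 < r) (ε : ℕ → Bool) :
    (matA0 L r ε).det =
        r ^ (-(L : ℝ)) * (r - 1) ^ ((nMinus L ε : ℝ) - 1) *
          ((r - 1) * (nPlus L ε : ℝ) + (nMinus L ε : ℝ)) ∧
      (matA0 L r ε).det ≠ 0 :=
  statement8_general L r hr ε
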